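/- arXiv:2303.13264 — 2 statements merged into one kernel-verified Lean document; each statement's English description precedes it below -/
import Mathlib

section
/- A linear map V ∈ C^{N×K} (N ≥ K) is an isometry with respect to the chordal distance—that is, d(Vb₁, Vb₂) = d(b₁, b₂) for all nonzero b₁, b₂ ∈ C^K with Vb₁, Vb₂ nonzero—if and only if V^H V = c·I_K for some c > 0. -/
open Matrix

/-- Squared Euclidean norm of a complex vector. -/
noncomputable def nsq {n : ℕ} (x : Fin n → ℂ) : ℝ := (star x ⬝ᵥ x).re

/-- Squared chordal distance between two (nonzero) complex vectors. -/
noncomputable def chordalSq {n : ℕ} (x y : Fin n → ℂ) : ℝ :=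
  1 - (‖star x ⬝ᵥ y‖) ^ 2 / (nsq x * nsq y)

/-!
Chordal distance `1` means orthogonality, and `V` is injective, so a chordal isometry `V` makes
the Gram matrix `G = Vᴴ V` preserve orthogonality: `u ⟂ v → u ⟂ G v`. Testing this on
`eᵢ ⟂ eⱼ` shows that `G` is diagonal, and on `eᵢ - eⱼ ⟂ eᵢ + eⱼ` that its diagonal is constant,
with value `‖V eᵢ‖² > 0`. Conversely, if `Vᴴ V = c • 1` then `V` scales every inner product by
`c`, and the chordal distance is invariant under such a scaling.
-/

namespace Matrix

section Orthogonality

variable {n R : Type*} [Fintype n] [DecidableEq n] [CommRing R] [StarRing R]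

lemma star_single_one_dotProduct (i : n) (v : n → R) :
    star (Pi.single i (1 : R)) ⬝ᵥ v = v i := by
  rw [← Pi.single_star, star_one, single_one_dotProduct]

def PreservesOrthogonality (G : Matrix n n R) : Prop :=
  ∀ u v : n → R, u ≠ 0 → v ≠ 0 → star u ⬝ᵥ v = 0 → star u ⬝ᵥ G *ᵥ v = 0

variable [Nontrivial R] {G : Matrix n n R}

lemma PreservesOrthogonality.apply_eq_zero (hG : G.PreservesOrthogonality) {i j : n}
    (hij : i ≠ j) : G i j = 0 := by
  simpa [star_single_one_dotProduct] using
    hG (Pi.single i 1) (Pi.single j 1) (by simp) (by simp) (by simp [hij])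

lemma PreservesOrthogonality.diag_eq (hG : G.PreservesOrthogonality) (i j : n) :
    G i i = G j j := by
  rcases eq_or_ne i j with rfl | hij
  · rfl
  -- `eᵢ - eⱼ ⟂ eᵢ + eⱼ`, and `(eᵢ - eⱼ)ᴴ G (eᵢ + eⱼ) = Gᵢᵢ - Gⱼⱼ` once `G` is diagonal.
  have h := hG (Pi.single i 1 - Pi.single j 1) (Pi.single i 1 + Pi.single j 1)
    (fun h => by simpa [hij] using congrFun h i) (fun h => by simpa [hij] using congrFun h i)
    (by simp [star_sub, hij, hij.symm])
  simp only [star_sub, sub_dotProduct, star_single_one_dotProduct, mulVec_add, Pi.add_apply,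
    mulVec_single_one, col_apply, hG.apply_eq_zero hij, hG.apply_eq_zero hij.symm] at h
  linear_combination h

lemma PreservesOrthogonality.eq_smul_one (hG : G.PreservesOrthogonality) (i : n) :
    G = G i i • 1 := by
  ext j k
  rcases eq_or_ne j k with rfl | hjk
  · simp [hG.diag_eq j i]
  · simp [hG.apply_eq_zero hjk, hjk]

end Orthogonality

lemma mulVec_ne_zero_of_rank_eq_card {m n R : Type*} [Fintype m] [Fintype n] [Field R]
    {A : Matrix m n R} (hA : A.rank = Fintype.card n) {v : n → R} (hv : v ≠ 0) :
    A *ᵥ v ≠ 0 := by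
  have hker : LinearMap.ker A.mulVecLin = ⊥ := by
    have := A.mulVecLin.finrank_range_add_finrank_ker
    rw [← rank, hA, Module.finrank_fintype_fun_eq_card] at this
    exact Submodule.finrank_eq_zero.mp (by omega)
  exact fun h => hv (ker_mulVecLin_eq_bot_iff.mp hker v h)

lemma star_mulVec_dotProduct_mulVec {m n R : Type*} [Fintype m] [Fintype n] [CommRing R]
    [StarRing R] (A : Matrix m n R) (u v : n → R) :
    star (A *ᵥ u) ⬝ᵥ A *ᵥ v = star u ⬝ᵥ (Aᴴ * A) *ᵥ v := by
  rw [star_mulVec, ← dotProduct_mulVec, mulVec_mulVec]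

end Matrix

open scoped ComplexOrder in
lemma star_dotProduct_self_eq_nsq {n : ℕ} (x : Fin n → ℂ) : star x ⬝ᵥ x = (nsq x : ℂ) :=
  Complex.ext rfl (Complex.nonneg_iff.mp (dotProduct_star_self_nonneg x)).2.symm

open scoped ComplexOrder in
lemma nsq_pos {n : ℕ} {x : Fin n → ℂ} (hx : x ≠ 0) : 0 < nsq x :=
  (Complex.pos_iff.mp (dotProduct_star_self_pos_iff.mpr hx)).1

lemma chordalSq_eq_one_iff {n : ℕ} {x y : Fin n → ℂ} (hx : x ≠ 0) (hy : y ≠ 0) :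
    chordalSq x y = 1 ↔ star x ⬝ᵥ y = 0 := by
  simp [chordalSq, (nsq_pos hx).ne', (nsq_pos hy).ne']

lemma chordalSq_mulVec_of_conjTranspose_mul_self_eq_smul {N K : ℕ}
    {V : Matrix (Fin N) (Fin K) ℂ} {c : ℝ} (hc : 0 < c) (hV : Vᴴ * V = (c : ℂ) • 1)
    (b₁ b₂ : Fin K → ℂ) : chordalSq (V *ᵥ b₁) (V *ᵥ b₂) = chordalSq b₁ b₂ := by
  have hdot : ∀ u v : Fin K → ℂ, star (V *ᵥ u) ⬝ᵥ V *ᵥ v = c * (star u ⬝ᵥ v) := fun u v => by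
    rw [star_mulVec_dotProduct_mulVec, hV, smul_mulVec, one_mulVec, dotProduct_smul, smul_eq_mul]
  have hnsq : ∀ u : Fin K → ℂ, nsq (V *ᵥ u) = c * nsq u := fun u => by
    rw [nsq, hdot, Complex.re_ofReal_mul, nsq]
  rw [chordalSq, chordalSq, hdot, hnsq, hnsq, norm_mul, Complex.norm_real,
    Real.norm_of_nonneg hc.le, mul_pow, mul_mul_mul_comm, ← sq, mul_div_mul_left _ _ (by positivity)]

theorem chordal_isometry_iff_general {N K : ℕ}
    (V : Matrix (Fin N) (Fin K) ℂ) (hrank : V.rank = K) :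
    (∀ b₁ b₂ : Fin K → ℂ, b₁ ≠ 0 → b₂ ≠ 0 →
        V.mulVec b₁ ≠ 0 → V.mulVec b₂ ≠ 0 →
        chordalSq (V.mulVec b₁) (V.mulVec b₂) = chordalSq b₁ b₂)
    ↔ (∃ c : ℝ, 0 < c ∧ Vᴴ * V = (c : ℂ) • 1) := by
  refine ⟨fun hiso => ?_, fun ⟨c, hc, hV⟩ b₁ b₂ _ _ _ _ =>
    chordalSq_mulVec_of_conjTranspose_mul_self_eq_smul hc hV b₁ b₂⟩
  have hV : ∀ b : Fin K → ℂ, b ≠ 0 → V *ᵥ b ≠ 0 := fun b =>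
    mulVec_ne_zero_of_rank_eq_card (by rw [hrank, Fintype.card_fin])
  have horth : (Vᴴ * V).PreservesOrthogonality := fun u v hu hv huv => by
    rwa [← star_mulVec_dotProduct_mulVec, ← chordalSq_eq_one_iff (hV u hu) (hV v hv),
      hiso u v hu hv (hV u hu) (hV v hv), chordalSq_eq_one_iff hu hv]
  rcases isEmpty_or_nonempty (Fin K) with hK | ⟨⟨i⟩⟩
  · exact ⟨1, one_pos, Subsingleton.elim _ _⟩
  · have he : (Pi.single i 1 : Fin K → ℂ) ≠ 0 := by simp
    refine ⟨nsq (V *ᵥ Pi.single i 1), nsq_pos (hV _ he), ?_⟩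
    rw [← star_dotProduct_self_eq_nsq, star_mulVec_dotProduct_mulVec, star_single_one_dotProduct,
      mulVec_single_one, col_apply]
    exact horth.eq_smul_one i

/-- A full-column-rank linear map `V` is an isometry for the chordal distance
iff `Vᴴ V` is a positive multiple of the identity. -/
theorem chordal_isometry_iff {N K : ℕ} (hNK : K ≤ N)
    (V : Matrix (Fin N) (Fin K) ℂ) (hrank : V.rank = K) :
    (∀ b₁ b₂ : Fin K → ℂ, b₁ ≠ 0 → b₂ ≠ 0 →
        V.mulVec b₁ ≠ 0 → V.mulVec b₂ ≠ 0 →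
        chordalSq (V.mulVec b₁) (V.mulVec b₂) = chordalSq b₁ b₂)
    ↔ (∃ c : ℝ, 0 < c ∧ Vᴴ * V = (c : ℂ) • 1) :=
  chordal_isometry_iff_general V hrank
end

section
/- (Lower bound of Corollary 1) Under the setup of the distortion decomposition, the overall distortion is bounded below by the projection distortion: d_p(W, R̃) ≤ D_H, where D_H = E_h[min_{ĥ∈H} d²(h,ĥ)] and d_p(W,R̃) = 1 − Tr(W W^H R̃). -/
open Matrix MeasureTheory

/-- Covariance of the normalized directions `h/‖h‖` under the distribution `μ`. -/
noncomputable def dirCov {N : ℕ} (μ : Measure (Fin N → ℂ)) :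
    Matrix (Fin N) (Fin N) ℂ :=
  Matrix.of fun i j => ∫ h, h i * star (h j) / (nsq h : ℂ) ∂μ

/-! Write `P = W Wᴴ`, the orthogonal projection onto the column space of `W`. For a unit vector
`c` with `P c = c` we have `⟨h, c⟩ = ⟨P h, c⟩`, so Cauchy–Schwarz gives
`|⟨h, c⟩|² ≤ ‖P h‖²`, i.e. `1 - ‖P h‖² / ‖h‖² ≤ d²(h, c)` for every codeword `c`.
Taking expectations, the left side becomes `1 - Tr(P R̃)`, because
`Tr(P · h hᴴ / ‖h‖²) = hᴴ P h / ‖h‖² = ‖P h‖² / ‖h‖²` and trace commutes with expectation. -/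

section nsq

variable {n : ℕ}

lemma nsq_eq_norm_toLp_sq (x : Fin n → ℂ) :
    nsq x = ‖(WithLp.toLp 2 x : EuclideanSpace ℂ (Fin n))‖ ^ 2 := by
  simp [nsq, EuclideanSpace.norm_sq_eq, dotProduct, Complex.re_sum, Complex.sq_norm,
    Complex.normSq_apply, mul_comm]

lemma nsq_nonneg (x : Fin n → ℂ) : 0 ≤ nsq x := by
  rw [nsq_eq_norm_toLp_sq]; positivity

lemma star_dotProduct_self (x : Fin n → ℂ) : star x ⬝ᵥ x = (nsq x : ℂ) := by
  refine Complex.ext rfl ?_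
  simp [dotProduct, Complex.im_sum, mul_comm]

lemma sq_norm_le_nsq (x : Fin n → ℂ) (i : Fin n) : ‖x i‖ ^ 2 ≤ nsq x := by
  rw [nsq_eq_norm_toLp_sq, EuclideanSpace.norm_sq_eq]
  exact Finset.single_le_sum (f := fun j => ‖x j‖ ^ 2) (fun j _ => sq_nonneg _)
    (Finset.mem_univ i)

lemma sq_norm_star_dotProduct_le (x y : Fin n → ℂ) :
    ‖star x ⬝ᵥ y‖ ^ 2 ≤ nsq x * nsq y := by
  have h := norm_inner_le_norm (𝕜 := ℂ) (WithLp.toLp 2 x : EuclideanSpace ℂ (Fin n))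
    (WithLp.toLp 2 y)
  rw [EuclideanSpace.inner_toLp_toLp, dotProduct_comm] at h
  rw [nsq_eq_norm_toLp_sq, nsq_eq_norm_toLp_sq, ← mul_pow]
  exact pow_le_pow_left₀ (norm_nonneg _) h 2

lemma continuous_nsq : Continuous (nsq (n := n)) := by
  unfold nsq dotProduct
  fun_prop

end nsq

section chordalSq

variable {n : ℕ}

lemma chordalSq_le_one (x y : Fin n → ℂ) : chordalSq x y ≤ 1 := by
  have := div_nonneg (sq_nonneg ‖star x ⬝ᵥ y‖) (mul_nonneg (nsq_nonneg x) (nsq_nonneg y))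
  unfold chordalSq
  linarith

lemma chordalSq_nonneg (x y : Fin n → ℂ) : 0 ≤ chordalSq x y := by
  have := div_le_one_of_le₀ (sq_norm_star_dotProduct_le x y)
    (mul_nonneg (nsq_nonneg x) (nsq_nonneg y))
  unfold chordalSq
  linarith

lemma measurable_chordalSq_left (c : Fin n → ℂ) :
    Measurable fun x : Fin n → ℂ => chordalSq x c := by
  have hdot : Continuous fun x : Fin n → ℂ => star x ⬝ᵥ c := by
    unfold dotProduct
    fun_prop
  exact ((hdot.norm.pow 2).measurable.div (continuous_nsq.measurable.mul_const _)).const_sub 1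

end chordalSq

theorem Finset.measurable_inf' {ι δ α : Type*} [MeasurableSpace δ] [MeasurableSpace α]
    [SemilatticeInf α] [MeasurableInf₂ α] {s : Finset ι} (hs : s.Nonempty) {f : ι → δ → α}
    (hf : ∀ i ∈ s, Measurable (f i)) : Measurable (s.inf' hs f) :=
  Finset.inf'_induction hs _ (fun _ hf _ hg => hf.inf hg) hf

lemma integrable_inf'_chordalSq {n : ℕ} (μ : Measure (Fin n → ℂ)) [IsFiniteMeasure μ]
    (H : Finset (Fin n → ℂ)) (hne : H.Nonempty) :
    Integrable (fun h => H.inf' hne fun c => chordalSq h c) μ := by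
  have hmeas : Measurable fun h => H.inf' hne fun c => chordalSq h c := by
    convert Finset.measurable_inf' hne (f := fun c x => chordalSq x c)
      fun c _ => measurable_chordalSq_left c using 1
    exact funext fun h => by rw [Finset.inf'_apply]
  refine .of_bound hmeas.aestronglyMeasurable 1 (ae_of_all _ fun h => ?_)
  rw [Real.norm_eq_abs, abs_le]
  exact ⟨(Finset.le_inf' hne _ fun c _ => chordalSq_nonneg h c).trans' (by norm_num),
    (Finset.inf'_le _ hne.choose_spec).trans (chordalSq_le_one _ _)⟩

section projection

variable {n : ℕ} {P : Matrix (Fin n) (Fin n) ℂ}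

lemma star_mulVec_dotProduct_of_isHermitian (hP : P.IsHermitian) (h c : Fin n → ℂ) :
    star (P *ᵥ h) ⬝ᵥ c = star h ⬝ᵥ P *ᵥ c := by
  rw [star_mulVec, hP.eq, ← dotProduct_mulVec]

lemma one_sub_nsq_mulVec_div_le_chordalSq (hP : P.IsHermitian) (h : Fin n → ℂ) {c : Fin n → ℂ}
    (hc : nsq c = 1) (hPc : P *ᵥ c = c) : 1 - nsq (P *ᵥ h) / nsq h ≤ chordalSq h c := by
  have hproj : ‖star h ⬝ᵥ c‖ ^ 2 ≤ nsq (P *ᵥ h) := by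
    rw [← hPc, ← star_mulVec_dotProduct_of_isHermitian hP]
    simpa [hc] using sq_norm_star_dotProduct_le (P *ᵥ h) c
  rw [chordalSq, hc, mul_one]
  linarith [div_le_div_of_nonneg_right hproj (nsq_nonneg h)]

variable (hP : P.IsHermitian) (hPP : IsIdempotentElem P)
include hP hPP

lemma star_dotProduct_mulVec_self_of_proj (h : Fin n → ℂ) :
    star h ⬝ᵥ P *ᵥ h = (nsq (P *ᵥ h) : ℂ) := by
  rw [← star_dotProduct_self, star_mulVec_dotProduct_of_isHermitian hP, mulVec_mulVec, hPP.eq]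

lemma nsq_mulVec_le_of_proj (h : Fin n → ℂ) : nsq (P *ᵥ h) ≤ nsq h := by
  have hcs := sq_norm_star_dotProduct_le h (P *ᵥ h)
  rw [star_dotProduct_mulVec_self_of_proj hP hPP, Complex.norm_real, Real.norm_eq_abs, sq_abs,
    sq] at hcs
  nlinarith [nsq_nonneg (P *ᵥ h), nsq_nonneg h]

end projection

section dirCov

variable {N : ℕ} (μ : Measure (Fin N → ℂ)) [IsFiniteMeasure μ]

lemma integrable_dirCov_entry (i j : Fin N) :
    Integrable (fun h : Fin N → ℂ => h i * star (h j) / (nsq h : ℂ)) μ := by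
  have hmeas : Measurable fun h : Fin N → ℂ => h i * star (h j) / (nsq h : ℂ) :=
    (by fun_prop : Continuous fun h : Fin N → ℂ => h i * star (h j)).measurable.div
      (Complex.continuous_ofReal.comp continuous_nsq).measurable
  refine .of_bound hmeas.aestronglyMeasurable 1 (ae_of_all _ fun h => ?_)
  rw [norm_div, norm_mul, norm_star, Complex.norm_real, Real.norm_eq_abs,
    abs_of_nonneg (nsq_nonneg h)]
  refine div_le_one_of_le₀ ?_ (nsq_nonneg h)
  nlinarith [sq_norm_le_nsq h i, sq_norm_le_nsq h j, sq_nonneg (‖h i‖ - ‖h j‖)]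

lemma trace_mul_dirCov (A : Matrix (Fin N) (Fin N) ℂ) :
    (A * dirCov μ).trace = ∫ h, star h ⬝ᵥ A *ᵥ h / (nsq h : ℂ) ∂μ := by
  have hint : ∀ i j,
      Integrable (fun h : Fin N → ℂ => A i j * (h j * star (h i) / (nsq h : ℂ))) μ :=
    fun i j => (integrable_dirCov_entry μ j i).const_mul _
  have hexpand : ∀ h : Fin N → ℂ, star h ⬝ᵥ A *ᵥ h / (nsq h : ℂ)
      = ∑ i, ∑ j, A i j * (h j * star (h i) / (nsq h : ℂ)) := fun h => by
    simp only [dotProduct, mulVec, Pi.star_apply, Finset.sum_div, Finset.mul_sum]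
    exact Finset.sum_congr rfl fun i _ => Finset.sum_congr rfl fun j _ => by ring
  simp only [hexpand, trace, diag, mul_apply, dirCov, of_apply]
  rw [integral_finsetSum _ fun i _ => integrable_finsetSum _ fun j _ => hint i j]
  refine Finset.sum_congr rfl fun i _ => ?_
  rw [integral_finsetSum _ fun j _ => hint i j]
  exact Finset.sum_congr rfl fun j _ => (integral_const_mul _ _).symm

variable {P : Matrix (Fin N) (Fin N) ℂ} (hP : P.IsHermitian) (hPP : IsIdempotentElem P)
include hP hPP

lemma integrable_nsq_mulVec_div_nsq :
    Integrable (fun h => nsq (P *ᵥ h) / nsq h) μ := by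
  have hmeas : Measurable fun h : Fin N → ℂ => nsq (P *ᵥ h) / nsq h :=
    (continuous_nsq.comp (continuous_const.matrix_mulVec continuous_id)).measurable.div
      continuous_nsq.measurable
  refine .of_bound hmeas.aestronglyMeasurable 1 (ae_of_all _ fun h => ?_)
  rw [Real.norm_eq_abs, abs_of_nonneg (div_nonneg (nsq_nonneg _) (nsq_nonneg _))]
  exact div_le_one_of_le₀ (nsq_mulVec_le_of_proj hP hPP h) (nsq_nonneg h)

lemma re_trace_mul_dirCov_of_proj :
    ((P * dirCov μ).trace).re = ∫ h, nsq (P *ᵥ h) / nsq h ∂μ := by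
  simp only [trace_mul_dirCov, star_dotProduct_mulVec_self_of_proj hP hPP, ← Complex.ofReal_div,
    integral_complex_ofReal, Complex.ofReal_re]

end dirCov

theorem distortion_lower_bound_general {N K : ℕ}
    (μ : Measure (Fin N → ℂ)) [IsProbabilityMeasure μ]
    (W : Matrix (Fin N) (Fin K) ℂ) (hW : Wᴴ * W = 1)
    (H : Finset (Fin N → ℂ)) (hne : H.Nonempty)
    (hcode : ∀ c ∈ H, nsq c = 1 ∧ (W * Wᴴ).mulVec c = c) :
    1 - ((W * Wᴴ * dirCov μ).trace).re
      ≤ ∫ h, H.inf' hne (fun c => chordalSq h c) ∂μ := by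
  have hP : (W * Wᴴ).IsHermitian := isHermitian_mul_conjTranspose_self W
  have hPP : IsIdempotentElem (W * Wᴴ) := by
    rw [IsIdempotentElem, Matrix.mul_assoc, ← Matrix.mul_assoc Wᴴ, hW, Matrix.one_mul]
  have hint := integrable_nsq_mulVec_div_nsq μ hP hPP
  calc 1 - ((W * Wᴴ * dirCov μ).trace).re
      = ∫ h, (1 - nsq ((W * Wᴴ) *ᵥ h) / nsq h) ∂μ := by
        rw [re_trace_mul_dirCov_of_proj μ hP hPP, integral_sub (integrable_const 1) hint]
        simp
    _ ≤ ∫ h, H.inf' hne (fun c => chordalSq h c) ∂μ :=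
        integral_mono ((integrable_const 1).sub hint) (integrable_inf'_chordalSq μ H hne)
          fun h => Finset.le_inf' hne _ fun c hc =>
            one_sub_nsq_mulVec_div_le_chordalSq hP h (hcode c hc).1 (hcode c hc).2

/-- Lower bound of Corollary 1: the projection distortion lower bounds the
overall distortion. -/
theorem distortion_lower_bound {N K : ℕ}
    (μ : Measure (Fin N → ℂ)) [IsProbabilityMeasure μ]
    (W : Matrix (Fin N) (Fin K) ℂ) (hW : Wᴴ * W = 1)
    (H : Finset (Fin N → ℂ)) (hne : H.Nonempty)
    (hcode : ∀ c ∈ H, nsq c = 1 ∧ (W * Wᴴ).mulVec c = c)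
    (hnz : ∀ᵐ h ∂μ, h ≠ 0 ∧ (W * Wᴴ).mulVec h ≠ 0) :
    1 - ((W * Wᴴ * dirCov μ).trace).re
      ≤ ∫ h, H.inf' hne (fun c => chordalSq h c) ∂μ :=
  distortion_lower_bound_general μ W hW H hne hcode
end
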